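/- Let (aₙ)ₙ≥₁ be positive reals, (bₙ)ₙ≥₁ reals, n ≥ 1, and let E₀ be a real number with Pₙ(E₀) ≠ 0. With the convention sgn(0) = 1, the number of eigenvalues of Jₙ strictly greater than E₀ equals the number of indices ℓ ∈ {1,…,n} with sgn(P_{ℓ−1}(E₀)) ≠ sgn(P_ℓ(E₀)), and the number of eigenvalues of Jₙ strictly less than E₀ equals the number of indices ℓ ∈ {1,…,n} with sgn(P_{ℓ−1}(E₀)) = sgn(P_ℓ(E₀)). -/

import Mathlib

/-!
Expanding `det (E - Jₙ)` along its last row yields the three-term recurrence of the `Pₙ`, so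
`Pₙ(E) = ∏ᵢ (E - λᵢ)` over the eigenvalues of `Jₙ`; these are simple, since an eigenvector of a
Jacobi matrix is determined by its first coordinate. Hence `sgn Pₗ(E₀) = (-1)^cₗ` whenever
`Pₗ(E₀) ≠ 0`, where `cₗ` counts the eigenvalues of `Jₗ` above `E₀`. Since `cₗ` is the largest
dimension of a subspace on which the quadratic form of `Jₗ - E₀` is positive definite, Cauchy
interlacing gives `c_{ℓ+1} - cₗ ∈ {0, 1}`: between nonzero values, `P` changes sign exactly when
`c` increases. If `Pₗ(E₀) = 0`, the recurrence gives `P_{ℓ+1}(E₀) = -aₗ² P_{ℓ-1}(E₀)`, so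
whatever the value of `sgn 0`, the steps `ℓ` and `ℓ + 1` together contribute one sign change,
matching `c_{ℓ+1} = c_{ℓ-1} + 1`. The eigenvalues below `E₀` are the remaining ones, as `E₀`
itself is not an eigenvalue.
-/

open Matrix Set

/-- The n×n Jacobi matrix with diagonal entries b₁,…,bₙ and off-diagonal entries a₁,…,aₙ₋₁. -/
def jacobiMatrix (a b : ℕ → ℝ) (n : ℕ) : Matrix (Fin n) (Fin n) ℝ :=
  Matrix.of fun i j =>
    if (i : ℕ) = (j : ℕ) then b ((i : ℕ) + 1)
    else if (i : ℕ) + 1 = (j : ℕ) then a ((i : ℕ) + 1)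
    else if (j : ℕ) + 1 = (i : ℕ) then a ((j : ℕ) + 1)
    else 0

/-- Shifted orthonormal polynomials: `opoly a b 0 = p₋₁ = 0`, `opoly a b 1 = p₀ = 1`, and
`opoly a b (n+1) = pₙ`, where `aₙ₊₁ pₙ₊₁(E) + (bₙ₊₁ − E) pₙ(E) + aₙ pₙ₋₁(E) = 0`. -/
noncomputable def opoly (a b : ℕ → ℝ) : ℕ → ℝ → ℝ
  | 0 => fun _ => 0
  | 1 => fun _ => 1
  | n + 2 => fun E => ((E - b (n + 1)) * opoly a b (n + 1) E - a n * opoly a b n E) / a (n + 1)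

/-- The monic orthogonal polynomials `Pₙ(E) = (a₁⋯aₙ) pₙ(E)`. -/
noncomputable def monicP (a b : ℕ → ℝ) (n : ℕ) (E : ℝ) : ℝ :=
  (∏ k ∈ Finset.Icc 1 n, a k) * opoly a b (n + 1) E

/-- `E` is an eigenvalue of the real matrix `M`. -/
def IsEigenvalue {n : ℕ} (M : Matrix (Fin n) (Fin n) ℝ) (E : ℝ) : Prop :=
  ∃ v : Fin n → ℝ, v ≠ 0 ∧ M.mulVec v = E • v

open scoped Classical

/-- The sign function with the convention `sgn(0) = 1`: `sgn(x) = 1` for `x ≥ 0` and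
`sgn(x) = −1` for `x < 0`. -/
noncomputable def sgn (x : ℝ) : ℝ := if 0 ≤ x then 1 else -1

open Finset

lemma sgn_of_nonneg {x : ℝ} (hx : 0 ≤ x) : sgn x = 1 := if_pos hx

lemma sgn_of_neg {x : ℝ} (hx : x < 0) : sgn x = -1 := if_neg hx.not_ge

lemma sgn_neg_one_pow_mul {x : ℝ} (hx : 0 < x) (k : ℕ) : sgn ((-1) ^ k * x) = (-1) ^ k := by
  rcases neg_one_pow_eq_or ℝ k with h | h <;> rw [h] <;> simp [sgn, hx.le, hx]

lemma sgn_prod_sub {ι : Type*} [Fintype ι] (x : ι → ℝ) {E : ℝ} (h : ∀ i, x i ≠ E) :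
    sgn (∏ i, (E - x i)) = (-1) ^ #{i | E < x i} := by
  have hfactor : ∀ i, E - x i = (if E < x i then -1 else 1) * |E - x i| := fun i => by
    split_ifs with hi
    · rw [abs_of_neg (by linarith)]; ring
    · rw [abs_of_nonneg (by linarith), one_mul]
  rw [Finset.prod_congr rfl fun i _ => hfactor i, prod_mul_distrib, prod_ite, prod_const,
    prod_const_one, mul_one]
  exact sgn_neg_one_pow_mul (prod_pos fun i _ => abs_pos.mpr (sub_ne_zero.mpr (h i).symm)) _

lemma card_filter_Icc_one_succ (P : ℕ → Prop) [DecidablePred P] (n : ℕ) :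
    #{ℓ ∈ Icc 1 (n + 1) | P ℓ} = #{ℓ ∈ Icc 1 n | P ℓ} + if P (n + 1) then 1 else 0 := by
  rw [card_filter, card_filter, sum_Icc_succ_top (by omega)]

theorem card_sgn_changes_eq (p : ℕ → ℝ) (c : ℕ → ℕ) (hp0 : p 0 ≠ 0) (hc0 : c 0 = 0)
    (hc : ∀ k, c (k + 1) = c k ∨ c (k + 1) = c k + 1)
    (hsgn : ∀ k, p k ≠ 0 → sgn (p k) = (-1) ^ c k)
    (hzero : ∀ k, p (k + 1) = 0 → p k * p (k + 2) < 0) (n : ℕ) (hn : p n ≠ 0) :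
    #{ℓ ∈ Icc 1 n | sgn (p (ℓ - 1)) ≠ sgn (p ℓ)} = c n := by
  induction n using Nat.strong_induction_on with | _ n ih =>
  match n, hn with
  | 0, _ => simp [hc0]
  | k + 1, hk1 =>
    by_cases hk : p k = 0
    · obtain ⟨j, rfl⟩ := Nat.exists_eq_succ_of_ne_zero (n := k) (by rintro rfl; exact hp0 hk)
      have hneg := hzero j hk
      have hj : p j ≠ 0 := left_ne_zero_of_mul hneg.ne
      have hopp : sgn (p (j + 2)) = -sgn (p j) := by
        rcases mul_neg_iff.mp hneg with ⟨h1, h2⟩ | ⟨h1, h2⟩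
        · rw [sgn_of_neg h2, sgn_of_nonneg h1.le]
        · rw [sgn_of_neg h1, sgn_of_nonneg h2.le, neg_neg]
      rw [card_filter_Icc_one_succ, card_filter_Icc_one_succ, ih j (by omega) hj,
        Nat.add_sub_cancel, Nat.add_sub_cancel, hk, sgn_of_nonneg le_rfl]
      rw [hsgn j hj, hsgn _ hk1] at hopp ⊢
      have hcj : c (j + 2) = c j + 1 := by
        have h1 : c (j + 2) ≠ c j := fun h => by rw [h, self_eq_neg] at hopp; simp at hopp
        have h2 : c (j + 2) ≠ c j + 2 := fun h => by
          rw [h, pow_add, neg_one_sq, mul_one, self_eq_neg] at hopp; simp at hopp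
        have h3 := hc j
        have h4 : c (j + 2) = c (j + 1) ∨ c (j + 2) = c (j + 1) + 1 := hc (j + 1)
        omega
      rcases neg_one_pow_eq_or ℝ (c j) with e | e <;> norm_num [hcj, pow_succ, e]
    · rw [card_filter_Icc_one_succ, ih k (by omega) hk, Nat.add_sub_cancel, hsgn k hk, hsgn _ hk1]
      rcases hc k with h | h <;> simp [h, pow_succ, self_eq_neg]

section ExtendByZero

variable {m n : Type*} [Fintype m] [Fintype n] {f : m → n}

lemma Function.extend_zero_dotProduct (hf : Function.Injective f) (u : m → ℝ) (w : n → ℝ) :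
    Function.extend f u 0 ⬝ᵥ w = u ⬝ᵥ (w ∘ f) := by
  classical
  symm
  calc u ⬝ᵥ (w ∘ f) = ∑ j ∈ univ.map ⟨f, hf⟩, Function.extend f u 0 j * w j := by
        simp [dotProduct, hf.extend_apply]
    _ = _ := Finset.sum_subset (subset_univ _) fun j _ hj => by
        rw [Function.extend_apply' _ _ _ (by simpa using hj), Pi.zero_apply, zero_mul]

lemma Function.extend_zero_dotProduct_mulVec (hf : Function.Injective f) (A : Matrix n n ℝ)
    (u : m → ℝ) :
    Function.extend f u 0 ⬝ᵥ (A *ᵥ Function.extend f u 0) = u ⬝ᵥ (A.submatrix f f *ᵥ u) := by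
  rw [Function.extend_zero_dotProduct hf]
  congr 1
  ext i
  simp only [Function.comp_apply, mulVec, dotProduct_comm (A (f i)),
    Function.extend_zero_dotProduct hf]
  exact dotProduct_comm _ _

end ExtendByZero

namespace Matrix.IsHermitian

variable {n : Type*} [Fintype n] [DecidableEq n] {A : Matrix n n ℝ} (hA : A.IsHermitian)

lemma det_scalar_sub (E : ℝ) : (scalar n E - A).det = ∏ i, (E - hA.eigenvalues i) := by
  rw [← eval_charpoly, hA.charpoly_eq, Polynomial.eval_prod]
  simp

lemma dotProduct_mulVec_sub_eq_sum (E₀ : ℝ) (v : n → ℝ) :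
    v ⬝ᵥ (A *ᵥ v) - E₀ * (v ⬝ᵥ v) =
      ∑ i, (hA.eigenvalues i - E₀) * (star (hA.eigenvectorUnitary : Matrix n n ℝ) *ᵥ v) i ^ 2 := by
  set U : Matrix n n ℝ := (hA.eigenvectorUnitary : Matrix n n ℝ)
  set w := star U *ᵥ v
  have hU : ∀ y, v ⬝ᵥ (U *ᵥ y) = w ⬝ᵥ y := fun y => by
    rw [dotProduct_mulVec, ← mulVec_transpose, ← conjTranspose_eq_transpose_of_trivial]
    rfl
  have hAv : v ⬝ᵥ (A *ᵥ v) = w ⬝ᵥ (diagonal hA.eigenvalues *ᵥ w) := by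
    have hA' : A = U * diagonal hA.eigenvalues * star U := by
      simpa [Unitary.conjStarAlgAut_apply] using hA.spectral_theorem
    conv_lhs => rw [hA', ← mulVec_mulVec, ← mulVec_mulVec, hU]
  have hvv : v ⬝ᵥ v = w ⬝ᵥ w := by
    have hv : v = U *ᵥ w := by
      rw [mulVec_mulVec, mem_unitaryGroup_iff.mp hA.eigenvectorUnitary.2, one_mulVec]
    conv_lhs => arg 2; rw [hv]
    rw [hU]
  rw [hAv, hvv]
  simp only [dotProduct, mulVec_diagonal, Finset.mul_sum, ← Finset.sum_sub_distrib]
  exact Finset.sum_congr rfl fun i _ => by ring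

lemma finrank_le_card_eigenvalues_gt {E₀ : ℝ} {S : Submodule ℝ (n → ℝ)}
    (hS : ∀ v ∈ S, v ≠ 0 → E₀ * (v ⬝ᵥ v) < v ⬝ᵥ (A *ᵥ v)) :
    Module.finrank ℝ S ≤ #{i | E₀ < hA.eigenvalues i} := by
  set U : Matrix n n ℝ := (hA.eigenvectorUnitary : Matrix n n ℝ)
  let φ : S →ₗ[ℝ] {i // E₀ < hA.eigenvalues i} → ℝ :=
    LinearMap.funLeft ℝ ℝ Subtype.val ∘ₗ (star U).mulVecLin ∘ₗ S.subtype
  have hφ : Function.Injective φ := by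
    rw [← LinearMap.ker_eq_bot, Submodule.eq_bot_iff]
    rintro ⟨v, hv⟩ hφv
    have hw : ∀ i, E₀ < hA.eigenvalues i → (star U *ᵥ v) i = 0 := fun i hi =>
      congrFun (LinearMap.mem_ker.mp hφv) ⟨i, hi⟩
    have hQ : v ⬝ᵥ (A *ᵥ v) - E₀ * (v ⬝ᵥ v) ≤ 0 := by
      rw [hA.dotProduct_mulVec_sub_eq_sum]
      refine Finset.sum_nonpos fun i _ => ?_
      by_cases hi : E₀ < hA.eigenvalues i
      · rw [hw i hi]; simp
      · exact mul_nonpos_of_nonpos_of_nonneg (by linarith) (sq_nonneg _)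
    by_contra hv0
    have := hS v hv (by simpa using hv0)
    linarith
  calc Module.finrank ℝ S ≤ Module.finrank ℝ ({i // E₀ < hA.eigenvalues i} → ℝ) :=
        LinearMap.finrank_le_finrank_of_injective hφ
    _ = #{i | E₀ < hA.eigenvalues i} := by simp [Fintype.card_subtype]

lemma exists_finrank_eq_card_eigenvalues_gt (E₀ : ℝ) :
    ∃ S : Submodule ℝ (n → ℝ), (∀ v ∈ S, v ≠ 0 → E₀ * (v ⬝ᵥ v) < v ⬝ᵥ (A *ᵥ v)) ∧
      Module.finrank ℝ S = #{i | E₀ < hA.eigenvalues i} := by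
  set U : Matrix n n ℝ := (hA.eigenvectorUnitary : Matrix n n ℝ) with hU_def
  have hUU : star U * U = 1 := mem_unitaryGroup_iff'.mp hA.eigenvectorUnitary.2
  let ψ := Function.ExtendByZero.linearMap ℝ (Subtype.val : {i // E₀ < hA.eigenvalues i} → n)
  have hψ : Function.Injective ψ := Function.extend_injective Subtype.val_injective (0 : n → ℝ)
  have hU : Function.Injective U.mulVecLin := fun x y h => by
    simpa [hUU] using congrArg (star U *ᵥ ·) h
  -- the span of the eigenvectors with eigenvalue above `E₀`
  refine ⟨LinearMap.range (U.mulVecLin ∘ₗ ψ), ?_, ?_⟩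
  · rintro _ ⟨x, rfl⟩ hx₀
    have hx : x ≠ 0 := by rintro rfl; simp at hx₀
    obtain ⟨j, hj⟩ := Function.ne_iff.mp hx
    have hψx : ∀ i, ψ x i ≠ 0 → E₀ < hA.eigenvalues i := fun i hi => by
      by_contra h
      exact hi (Function.extend_apply' _ _ _ fun ⟨k, hk⟩ => h (hk ▸ k.2))
    suffices 0 < ∑ i, (hA.eigenvalues i - E₀) * (ψ x i) ^ 2 by
      rw [← sub_pos, hA.dotProduct_mulVec_sub_eq_sum, ← hU_def]
      simpa [mulVec_mulVec, hUU] using this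
    refine Finset.sum_pos' (fun i _ => ?_) ⟨j, Finset.mem_univ _, ?_⟩
    · by_cases hi : ψ x i = 0
      · simp [hi]
      · exact mul_nonneg (by linarith [hψx i hi]) (sq_nonneg _)
    · have hψj : ψ x j = x j := Subtype.val_injective.extend_apply _ _ _
      exact mul_pos (by linarith [j.2]) (by rw [hψj]; exact pow_two_pos_of_ne_zero hj)
  · rw [LinearMap.finrank_range_of_inj (f := U.mulVecLin ∘ₗ ψ) (hU.comp hψ)]
    simp [Fintype.card_subtype]

lemma card_eigenvalues_lt_add_card_eigenvalues_gt {E₀ : ℝ} (h : ∀ i, hA.eigenvalues i ≠ E₀) :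
    #{i | hA.eigenvalues i < E₀} + #{i | E₀ < hA.eigenvalues i} = Fintype.card n := by
  have hbelow : univ.filter (fun i => hA.eigenvalues i < E₀) =
      univ.filter (fun i => ¬E₀ < hA.eigenvalues i) :=
    filter_congr fun i _ => ⟨fun h' => not_lt.mpr h'.le, fun h' => (not_lt.mp h').lt_of_ne (h i)⟩
  rw [hbelow, add_comm, card_filter_add_card_filter_not, card_univ]

variable {m : Type*} [Fintype m] [DecidableEq m] {B : Matrix m m ℝ} (hB : B.IsHermitian)
  {f : m → n}

lemma card_eigenvalues_gt_submatrix_le (hf : Function.Injective f) (hAB : A.submatrix f f = B)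
    (E₀ : ℝ) :
    #{i | E₀ < hB.eigenvalues i} ≤ #{i | E₀ < hA.eigenvalues i} := by
  subst hAB
  obtain ⟨S, hS, hSdim⟩ := hB.exists_finrank_eq_card_eigenvalues_gt E₀
  let ι := Function.ExtendByZero.linearMap ℝ f
  have hι : Function.Injective ι := Function.extend_injective hf (0 : n → ℝ)
  rw [← hSdim, (Submodule.equivMapOfInjective ι hι S).finrank_eq]
  refine hA.finrank_le_card_eigenvalues_gt ?_
  rintro _ ⟨u, hu, rfl⟩ hu0
  have hu0 : u ≠ 0 := by rintro rfl; simp at hu0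
  rw [show ι u = Function.extend f u 0 from rfl, Function.extend_zero_dotProduct_mulVec hf,
    Function.extend_zero_dotProduct hf, Function.extend_comp hf]
  exact hS u hu hu0

lemma card_eigenvalues_gt_le_submatrix_add (hf : Function.Injective f)
    (hAB : A.submatrix f f = B) (E₀ : ℝ) :
    #{i | E₀ < hA.eigenvalues i} ≤
      #{i | E₀ < hB.eigenvalues i} + (Fintype.card n - Fintype.card m) := by
  subst hAB
  obtain ⟨S, hS, hSdim⟩ := hA.exists_finrank_eq_card_eigenvalues_gt E₀
  let ι := Function.ExtendByZero.linearMap ℝ f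
  have hι : Function.Injective ι := Function.extend_injective hf (0 : n → ℝ)
  have hdim : Module.finrank ℝ (S.comap ι) = Module.finrank ℝ ↥(LinearMap.range ι ⊓ S) := by
    rw [← Submodule.map_comap_eq, (Submodule.equivMapOfInjective ι hι _).finrank_eq]
  have hsum := Submodule.finrank_sup_add_finrank_inf_eq (LinearMap.range ι) S
  have hsup := Submodule.finrank_le (LinearMap.range ι ⊔ S)
  have hrange : Module.finrank ℝ (LinearMap.range ι) = Fintype.card m := by
    rw [LinearMap.finrank_range_of_inj hι, Module.finrank_fintype_fun_eq_card]
  have hle : Module.finrank ℝ (S.comap ι) ≤ #{i | E₀ < hB.eigenvalues i} := by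
    refine hB.finrank_le_card_eigenvalues_gt fun u hu hu0 => ?_
    have hιu : ι u ≠ 0 := fun h => hu0 (hι (by rw [h, map_zero]))
    have := hS _ hu hιu
    rwa [show ι u = Function.extend f u 0 from rfl, Function.extend_zero_dotProduct_mulVec hf,
      Function.extend_zero_dotProduct hf, Function.extend_comp hf] at this
  rw [Module.finrank_fintype_fun_eq_card] at hsup
  omega

end Matrix.IsHermitian

lemma isEigenvalue_iff_det_scalar_sub {m : ℕ} (M : Matrix (Fin m) (Fin m) ℝ) (E : ℝ) :
    IsEigenvalue M E ↔ (scalar (Fin m) E - M).det = 0 := by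
  rw [← exists_mulVec_eq_zero_iff, IsEigenvalue]
  simp [sub_mulVec, sub_eq_zero, eq_comm]

lemma Matrix.IsHermitian.isEigenvalue_iff {m : ℕ} {A : Matrix (Fin m) (Fin m) ℝ}
    (hA : A.IsHermitian) (E : ℝ) : IsEigenvalue A E ↔ ∃ i, hA.eigenvalues i = E := by
  rw [isEigenvalue_iff_det_scalar_sub, hA.det_scalar_sub, prod_eq_zero_iff]
  exact ⟨fun ⟨i, _, hi⟩ => ⟨i, (sub_eq_zero.mp hi).symm⟩,
    fun ⟨i, hi⟩ => ⟨i, mem_univ _, sub_eq_zero.mpr hi.symm⟩⟩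

lemma Matrix.IsHermitian.ncard_isEigenvalue {m : ℕ} {A : Matrix (Fin m) (Fin m) ℝ}
    (hA : A.IsHermitian) (hinj : Function.Injective hA.eigenvalues) (p : ℝ → Prop) :
    {E | IsEigenvalue A E ∧ p E}.ncard = #{i | p (hA.eigenvalues i)} := by
  have : {E | IsEigenvalue A E ∧ p E} =
      hA.eigenvalues '' ↑({i | p (hA.eigenvalues i)} : Finset _) := by
    ext E
    simp only [Set.mem_ofPred_eq, hA.isEigenvalue_iff, coe_filter, Finset.mem_univ, true_and,
      Set.mem_image]
    constructor
    · rintro ⟨⟨i, rfl⟩, hp⟩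
      exact ⟨i, hp, rfl⟩
    · rintro ⟨i, hp, rfl⟩
      exact ⟨⟨i, rfl⟩, hp⟩
  rw [this, Set.ncard_image_of_injective _ hinj, Set.ncard_coe_finset]

section Jacobi

variable (a b : ℕ → ℝ)

lemma jacobiMatrix_submatrix {m m' : ℕ} {f g : Fin m → Fin m'} (hf : ∀ i, (f i : ℕ) = i)
    (hg : ∀ j, (g j : ℕ) = j) : (jacobiMatrix a b m').submatrix f g = jacobiMatrix a b m := by
  ext i j
  simp [jacobiMatrix, hf, hg]

lemma jacobiMatrix_apply_of_lt {m : ℕ} {i j : Fin m} (h : (i : ℕ) + 1 < j ∨ (j : ℕ) + 1 < i) :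
    jacobiMatrix a b m i j = 0 := by
  simp only [jacobiMatrix, of_apply]
  split_ifs <;> first | rfl | omega

lemma jacobiMatrix_apply_self {m : ℕ} (i : Fin m) : jacobiMatrix a b m i i = b (i + 1) := by
  simp [jacobiMatrix]

lemma jacobiMatrix_apply_of_eq_succ {m : ℕ} {i j : Fin m} (h : (j : ℕ) = i + 1) :
    jacobiMatrix a b m i j = a (i + 1) := by
  simp only [jacobiMatrix, of_apply]
  split_ifs <;> first | rfl | omega

lemma jacobiMatrix_apply_of_succ_eq {m : ℕ} {i j : Fin m} (h : (i : ℕ) = j + 1) :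
    jacobiMatrix a b m i j = a (j + 1) := by
  simp only [jacobiMatrix, of_apply]
  split_ifs <;> first | rfl | omega

lemma scalar_sub_jacobiMatrix (m : ℕ) (E : ℝ) :
    scalar (Fin m) E - jacobiMatrix a b m = jacobiMatrix (-a) (fun k => E - b k) m := by
  ext i j
  simp only [jacobiMatrix, scalar_apply, Matrix.sub_apply, diagonal_apply, of_apply, Fin.ext_iff,
    Pi.neg_apply]
  split_ifs <;> ring

lemma det_jacobiMatrix_add_two (k : ℕ) :
    (jacobiMatrix a b (k + 2)).det =
      b (k + 2) * (jacobiMatrix a b (k + 1)).det - a (k + 1) ^ 2 * (jacobiMatrix a b k).det := by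
  -- Expand along the last row; the minor of the entry `a (k + 1)` has a single nonzero entry,
  -- again `a (k + 1)`, in its last column.
  have hN : ((jacobiMatrix a b (k + 2)).submatrix Fin.castSucc
      (Fin.castSucc (Fin.last k)).succAbove).det = a (k + 1) * (jacobiMatrix a b k).det := by
    rw [det_succ_column _ (Fin.last _), Fin.sum_univ_castSucc,
      Finset.sum_eq_zero fun i _ => by
        rw [submatrix_apply, Fin.succAbove_castSucc_self,
          jacobiMatrix_apply_of_lt _ _ (by simp), mul_zero, zero_mul],
      zero_add, submatrix_apply, Fin.succAbove_castSucc_self,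
      jacobiMatrix_apply_of_eq_succ _ _ (by simp), Fin.succAbove_last, submatrix_submatrix,
      jacobiMatrix_submatrix _ _ (fun i => by simp) (fun j => by
        simp only [Function.comp_apply, Fin.succAbove_castSucc_of_lt _ _ j.castSucc_lt_last,
          Fin.val_castSucc])]
    simp [← two_mul, pow_mul]
  rw [det_succ_row _ (Fin.last _), Fin.sum_univ_castSucc, Fin.sum_univ_castSucc,
    Finset.sum_eq_zero fun j _ => by
      rw [jacobiMatrix_apply_of_lt _ _ (by simp), mul_zero, zero_mul],
    zero_add, Fin.succAbove_last, hN,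
    jacobiMatrix_submatrix _ _ (fun i => by simp) (fun j => by simp),
    jacobiMatrix_apply_self, jacobiMatrix_apply_of_succ_eq _ _ (by simp)]
  simp only [Fin.val_last, Fin.val_castSucc]
  rw [Odd.neg_one_pow ⟨k, by ring⟩, Even.neg_one_pow ⟨k + 1, rfl⟩]
  ring

lemma monicP_zero (E : ℝ) : monicP a b 0 E = 1 := by
  simp [monicP, opoly]

lemma monicP_one {E : ℝ} (h1 : a 1 ≠ 0) : monicP a b 1 E = E - b 1 := by
  simp only [monicP, Finset.Icc_self, Finset.prod_singleton, opoly, mul_zero, sub_zero]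
  field_simp

lemma monicP_add_two {k : ℕ} {E : ℝ} (h1 : a (k + 1) ≠ 0) (h2 : a (k + 2) ≠ 0) :
    monicP a b (k + 2) E =
      (E - b (k + 2)) * monicP a b (k + 1) E - a (k + 1) ^ 2 * monicP a b k E := by
  simp only [monicP, Finset.prod_Icc_succ_top (show 1 ≤ k + 1 + 1 by omega),
    Finset.prod_Icc_succ_top (show 1 ≤ k + 1 by omega)]
  rw [opoly]
  field_simp

lemma det_scalar_sub_jacobiMatrix (ha : ∀ k, 0 < k → a k ≠ 0) (m : ℕ) (E : ℝ) :
    (scalar (Fin m) E - jacobiMatrix a b m).det = monicP a b m E := by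
  rw [scalar_sub_jacobiMatrix]
  induction m using Nat.twoStepInduction with
  | zero => simp [monicP_zero]
  | one => simp [monicP_one a b (ha 1 one_pos), jacobiMatrix]
  | more k ih₀ ih₁ =>
    rw [det_jacobiMatrix_add_two, ih₀, ih₁, monicP_add_two a b (ha _ k.succ_pos) (ha _ (by omega)),
      Pi.neg_apply, neg_sq]

lemma jacobiMatrix_isHermitian (m : ℕ) : (jacobiMatrix a b m).IsHermitian := by
  ext i j
  simp only [conjTranspose_apply, jacobiMatrix, of_apply, star_trivial]
  split_ifs <;> first | rfl | omega | (congr 1; omega)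

lemma eq_zero_of_jacobiMatrix_mulVec_eq_zero (ha : ∀ k, 0 < k → a k ≠ 0) {m : ℕ}
    {v : Fin (m + 1) → ℝ} (hv : jacobiMatrix a b (m + 1) *ᵥ v = 0) (h0 : v 0 = 0) : v = 0 := by
  set C := (jacobiMatrix a b (m + 1)).submatrix Fin.castSucc Fin.succ with hC_def
  have hC : C *ᵥ (v ∘ Fin.succ) = 0 := funext fun i => by
    simpa [mulVec, dotProduct, Fin.sum_univ_succ, h0, C] using congrFun hv (Fin.castSucc i)
  have hCtri : C.IsLowerTriangular := fun i j hij =>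
    jacobiMatrix_apply_of_lt _ _ (Or.inl (by simp only [Fin.val_castSucc, Fin.val_succ]; exact Nat.add_lt_add_right hij 1))
  have hCdet : C.det ≠ 0 := by
    rw [det_of_isLowerTriangular C hCtri, Finset.prod_ne_zero_iff]
    intro i _
    rw [hC_def, submatrix_apply, jacobiMatrix_apply_of_eq_succ _ _ (by simp)]
    exact ha _ (by simp)
  have hsucc : v ∘ Fin.succ = 0 := by
    by_contra hne
    exact hCdet (exists_mulVec_eq_zero_iff.mp ⟨_, hne, hC⟩)
  funext i
  exact Fin.cases h0 (fun j => congrFun hsucc j) i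

lemma eq_zero_of_jacobiMatrix_mulVec_eq_smul (ha : ∀ k, 0 < k → a k ≠ 0) {m : ℕ} {E : ℝ}
    {v : Fin (m + 1) → ℝ} (hv : jacobiMatrix a b (m + 1) *ᵥ v = E • v) (h0 : v 0 = 0) : v = 0 := by
  refine eq_zero_of_jacobiMatrix_mulVec_eq_zero (-a) (fun k => E - b k)
    (fun k hk => neg_ne_zero.mpr (ha k hk)) ?_ h0
  rw [← scalar_sub_jacobiMatrix, sub_mulVec, hv]
  ext k
  simp

lemma jacobiMatrix_eigenvalues_injective (ha : ∀ k, 0 < k → a k ≠ 0) (m : ℕ) :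
    Function.Injective (jacobiMatrix_isHermitian a b m).eigenvalues := by
  intro i j hij
  by_contra hne
  rcases m with _ | m
  · exact i.elim0
  set hJ := jacobiMatrix_isHermitian a b (m + 1)
  have hu := hJ.mulVec_eigenvectorBasis i
  have hw := hJ.mulVec_eigenvectorBasis j
  have huu := hJ.eigenvectorBasis.orthonormal.1 i
  have hww := hJ.eigenvectorBasis.orthonormal.1 j
  have huw := hJ.eigenvectorBasis.orthonormal.2 hne
  rw [← hij] at hw
  generalize hJ.eigenvectorBasis i = u at *
  generalize hJ.eigenvectorBasis j = w at *
  have hw0 : w 0 ≠ 0 := fun h0 => by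
    rw [WithLp.ofLp_injective 2 (eq_zero_of_jacobiMatrix_mulVec_eq_smul a b ha hw h0)] at hww
    simp at hww
  -- `z` is an eigenvector vanishing at the first coordinate, hence zero, yet `⟪u, z⟫ = w 0`.
  set z : EuclideanSpace ℝ (Fin (m + 1)) := w 0 • u - u 0 • w
  have hz : z = 0 := by
    refine WithLp.ofLp_injective 2
      (eq_zero_of_jacobiMatrix_mulVec_eq_smul a b ha (E := hJ.eigenvalues i) ?_ ?_)
    · simp only [z, WithLp.ofLp_sub, WithLp.ofLp_smul, mulVec_sub, mulVec_smul, hu, hw]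
      module
    · simp [z, mul_comm]
  have huz : inner ℝ u z = w 0 := by
    simp [z, inner_sub_right, inner_smul_right, huu, huw]
  rw [hz, inner_zero_right] at huz
  exact hw0 huz.symm

lemma monicP_eq_prod (ha : ∀ k, 0 < k → a k ≠ 0) (m : ℕ) (E : ℝ) :
    monicP a b m E = ∏ i, (E - (jacobiMatrix_isHermitian a b m).eigenvalues i) := by
  rw [← det_scalar_sub_jacobiMatrix a b ha, Matrix.IsHermitian.det_scalar_sub]

lemma eigenvalues_ne_of_monicP_ne_zero (ha : ∀ k, 0 < k → a k ≠ 0) {m : ℕ} {E : ℝ}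
    (h : monicP a b m E ≠ 0) (i : Fin m) : (jacobiMatrix_isHermitian a b m).eigenvalues i ≠ E :=
  fun hi => h <| by
    rw [monicP_eq_prod a b ha]
    exact prod_eq_zero (Finset.mem_univ i) (by rw [hi, sub_self])

lemma sgn_monicP (ha : ∀ k, 0 < k → a k ≠ 0) {m : ℕ} {E : ℝ} (h : monicP a b m E ≠ 0) :
    sgn (monicP a b m E) = (-1) ^ #{i | E < (jacobiMatrix_isHermitian a b m).eigenvalues i} := by
  rw [monicP_eq_prod a b ha]
  exact sgn_prod_sub _ (eigenvalues_ne_of_monicP_ne_zero a b ha h)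

lemma monicP_ne_zero_or_monicP_succ_ne_zero (ha : ∀ k, 0 < k → a k ≠ 0) (E : ℝ) (k : ℕ) :
    monicP a b k E ≠ 0 ∨ monicP a b (k + 1) E ≠ 0 := by
  induction k with
  | zero => simp [monicP_zero]
  | succ k ih =>
    by_contra! h
    obtain ⟨h₁, h₂⟩ := h
    rw [monicP_add_two a b (ha _ k.succ_pos) (ha _ (by omega)), h₁] at h₂
    exact ih.resolve_right (not_not.mpr h₁) (by simpa [ha _ k.succ_pos] using h₂)

lemma monicP_mul_monicP_add_two_neg (ha : ∀ k, 0 < k → a k ≠ 0) {E : ℝ} {k : ℕ}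
    (h : monicP a b (k + 1) E = 0) : monicP a b k E * monicP a b (k + 2) E < 0 := by
  have hk := (monicP_ne_zero_or_monicP_succ_ne_zero a b ha E k).resolve_right (not_not.mpr h)
  rw [monicP_add_two a b (ha _ k.succ_pos) (ha _ (by omega)), h]
  have : 0 < a (k + 1) ^ 2 * monicP a b k E ^ 2 := by
    have := ha _ k.succ_pos
    positivity
  nlinarith

lemma card_eigenvalues_gt_jacobiMatrix_succ (E₀ : ℝ) (m : ℕ) :
    #{i | E₀ < (jacobiMatrix_isHermitian a b (m + 1)).eigenvalues i} =
        #{i | E₀ < (jacobiMatrix_isHermitian a b m).eigenvalues i} ∨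
      #{i | E₀ < (jacobiMatrix_isHermitian a b (m + 1)).eigenvalues i} =
        #{i | E₀ < (jacobiMatrix_isHermitian a b m).eigenvalues i} + 1 := by
  have hsub := jacobiMatrix_submatrix a b (m' := m + 1) (f := Fin.castSucc) (g := Fin.castSucc)
    (fun _ => rfl) (fun _ => rfl)
  have h₁ := (jacobiMatrix_isHermitian a b (m + 1)).card_eigenvalues_gt_submatrix_le
    (jacobiMatrix_isHermitian a b m) (Fin.castSucc_injective m) hsub E₀
  have h₂ := (jacobiMatrix_isHermitian a b (m + 1)).card_eigenvalues_gt_le_submatrix_add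
    (jacobiMatrix_isHermitian a b m) (Fin.castSucc_injective m) hsub E₀
  simp only [Fintype.card_fin, Nat.add_sub_cancel_left] at h₂
  omega

end Jacobi

theorem sturm_oscillation_jacobi_sgn_zero_one (a b : ℕ → ℝ) (ha : ∀ n, 1 ≤ n → 0 < a n)
    (n : ℕ) (E₀ : ℝ) (hP : monicP a b n E₀ ≠ 0) :
    {E : ℝ | IsEigenvalue (jacobiMatrix a b n) E ∧ E₀ < E}.ncard =
      ((Finset.Icc 1 n).filter
        (fun ℓ => sgn (monicP a b (ℓ - 1) E₀) ≠ sgn (monicP a b ℓ E₀))).card ∧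
    {E : ℝ | IsEigenvalue (jacobiMatrix a b n) E ∧ E < E₀}.ncard =
      ((Finset.Icc 1 n).filter
        (fun ℓ => sgn (monicP a b (ℓ - 1) E₀) = sgn (monicP a b ℓ E₀))).card := by
  have ha' : ∀ k, 0 < k → a k ≠ 0 := fun k hk => (ha k hk).ne'
  have hinj := jacobiMatrix_eigenvalues_injective a b ha' n
  have hchanges := card_sgn_changes_eq (fun k => monicP a b k E₀)
    (fun k => #{i | E₀ < (jacobiMatrix_isHermitian a b k).eigenvalues i})
    (by simp [monicP_zero]) (by simp) (card_eigenvalues_gt_jacobiMatrix_succ a b E₀)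
    (fun k hk => sgn_monicP a b ha' hk) (fun k hk => monicP_mul_monicP_add_two_neg a b ha' hk) n hP
  rw [(jacobiMatrix_isHermitian a b n).ncard_isEigenvalue hinj,
    (jacobiMatrix_isHermitian a b n).ncard_isEigenvalue hinj]
  refine ⟨hchanges.symm, ?_⟩
  have hbelow := (jacobiMatrix_isHermitian a b n).card_eigenvalues_lt_add_card_eigenvalues_gt
    (eigenvalues_ne_of_monicP_ne_zero a b ha' hP)
  have hsplit := card_filter_add_card_filter_not (s := Icc 1 n)
    (fun ℓ => sgn (monicP a b (ℓ - 1) E₀) ≠ sgn (monicP a b ℓ E₀))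
  simp only [not_not, Fintype.card_fin, Nat.card_Icc, Nat.add_sub_cancel] at hbelow hsplit
  omega
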